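/- arXiv:2601.14747 — 6 statements merged into one kernel-verified Lean document; each statement's English description precedes it below -/
import Mathlib

section
/- For every integer N ≥ 3 there exists a joint distribution p on {1,…,N}² with zero diagonal, nonnegative entries summing to 1, such that the order ratio α(p) = e(p)/(e(p)+r(p)) equals exactly 1/e, and hence the resilience R(p) = -α ln α attains the optimal value 1/e. -/
/-!
If `P` has all row and column sums equal to `1/n` and entropy `H = -∑ P log P`, then
`e(P) = 2 log n - H` and `r(P) = 2H - 2 log n`, so `α(P) = 2 log n / H - 1`, and `α(P) = 1/e`
exactly when `H = 2e log n / (e + 1)`. Uniform marginals are preserved by convex combinations,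
so along the segment from the complete network with uniform weights (`H = log (n (n - 1))`) to the
unidirectional ring (`H = log n`) the entropy varies continuously between these two values, and
the target value lies between them for `n ≥ 3` (using `n ≤ (n - 1)²` and `e ≤ 3`).
-/

open Real Finset

lemma mul_log_div_eq_sub (x : ℝ) {a : ℝ} (ha : a ≠ 0) :
    x * log (x / a) = x * log x - x * log a := by
  rcases eq_or_ne x 0 with rfl | hx
  · simp
  · rw [log_div hx ha]
    ring

section Marginals

variable {ι : Type*} [Fintype ι]

noncomputable def matrixEntropy (P : ι → ι → ℝ) : ℝ := ∑ i, ∑ j, negMulLog (P i j)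

def HasUniformMarginals (P : ι → ι → ℝ) : Prop :=
  (∀ i, ∑ j, P i j = (Fintype.card ι : ℝ)⁻¹) ∧ ∀ j, ∑ i, P i j = (Fintype.card ι : ℝ)⁻¹

lemma sum_sum_mul_log_div_const (P : ι → ι → ℝ) {a : ℝ} (ha : a ≠ 0) :
    ∑ i, ∑ j, P i j * log (P i j / a) = -matrixEntropy P - (∑ i, ∑ j, P i j) * log a := by
  simp only [matrixEntropy, negMulLog, mul_log_div_eq_sub _ ha, Finset.sum_sub_distrib,
    Finset.sum_mul, neg_mul, Finset.sum_neg_distrib, neg_neg]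

lemma matrixEntropy_of_forall_eq_zero_or_eq {P : ι → ι → ℝ} {c : ℝ}
    (hP : ∀ i j, P i j = 0 ∨ P i j = c) (hmass : ∑ i, ∑ j, P i j = 1) :
    matrixEntropy P = -log c := by
  have hterm : ∀ i j, negMulLog (P i j) = -log c * P i j := by
    intro i j
    rcases hP i j with h | h <;> simp [h, negMulLog, mul_comm]
  simp only [matrixEntropy, hterm, ← Finset.mul_sum, hmass, mul_one]

namespace HasUniformMarginals

variable {P : ι → ι → ℝ}

lemma sum_sum_eq_one [Nonempty ι] (hP : HasUniformMarginals P) : ∑ i, ∑ j, P i j = 1 := by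
  simp [hP.1]

lemma sum_sum_mul_log_div_rowSum_mul_colSum [Nonempty ι] (hP : HasUniformMarginals P) :
    ∑ i, ∑ j, P i j * log (P i j / ((∑ k, P i k) * (∑ k, P k j)))
      = 2 * log (Fintype.card ι) - matrixEntropy P := by
  simp only [hP.1, hP.2]
  rw [sum_sum_mul_log_div_const P (by simp), hP.sum_sum_eq_one, log_mul (by simp) (by simp),
    log_inv]
  ring

lemma sum_sum_mul_log_div_rowSum [Nonempty ι] (hP : HasUniformMarginals P) :
    ∑ i, ∑ j, P i j * log (P i j / ∑ k, P i k) = log (Fintype.card ι) - matrixEntropy P := by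
  simp only [hP.1]
  rw [sum_sum_mul_log_div_const P (by simp), hP.sum_sum_eq_one, log_inv]
  ring

lemma sum_sum_mul_log_div_colSum [Nonempty ι] (hP : HasUniformMarginals P) :
    ∑ i, ∑ j, P i j * log (P i j / ∑ k, P k j) = log (Fintype.card ι) - matrixEntropy P := by
  simp only [hP.2]
  rw [sum_sum_mul_log_div_const P (by simp), hP.sum_sum_eq_one, log_inv]
  ring

lemma convexCombination (hP : HasUniformMarginals P) {Q : ι → ι → ℝ}
    (hQ : HasUniformMarginals Q) (t : ℝ) :
    HasUniformMarginals fun i j => t * P i j + (1 - t) * Q i j := by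
  constructor <;> intro _ <;>
    simp only [Finset.sum_add_distrib, ← Finset.mul_sum, hP.1, hP.2, hQ.1, hQ.2] <;> ring

end HasUniformMarginals

end Marginals

section RingAndComplete

variable (n : ℕ)

noncomputable def completeWeights : Fin n → Fin n → ℝ :=
  fun i j => if i = j then 0 else ((n : ℝ) * (n - 1))⁻¹

lemma completeWeights_hasUniformMarginals (hn : 2 ≤ n) :
    HasUniformMarginals (completeWeights n) := by
  have hn1 : ((n - 1 : ℕ) : ℝ) = n - 1 := by push_cast [Nat.cast_sub (by omega : 1 ≤ n)]; ring
  have hn1' : (n : ℝ) - 1 ≠ 0 := by rw [← hn1]; exact_mod_cast (by omega : n - 1 ≠ 0)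
  refine ⟨fun i => ?_, fun j => ?_⟩ <;>
  · simp [completeWeights, Finset.sum_ite, Finset.filter_ne', Finset.filter_ne, hn1]
    field_simp

lemma matrixEntropy_completeWeights (hn : 2 ≤ n) :
    matrixEntropy (completeWeights n) = log (n * (n - 1)) := by
  have : NeZero n := ⟨by omega⟩
  rw [matrixEntropy_of_forall_eq_zero_or_eq (c := ((n : ℝ) * (n - 1))⁻¹)
    (fun i j => by unfold completeWeights; split_ifs <;> simp)
    (completeWeights_hasUniformMarginals n hn).sum_sum_eq_one, log_inv, neg_neg]

variable [NeZero n]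

noncomputable def ringWeights : Fin n → Fin n → ℝ :=
  fun i j => if j = i + 1 then (n : ℝ)⁻¹ else 0

lemma ringWeights_hasUniformMarginals : HasUniformMarginals (ringWeights n) := by
  refine ⟨fun i => ?_, fun j => ?_⟩
  · simp [ringWeights]
  · have hj : ∀ i : Fin n, j = i + 1 ↔ i = j - 1 := fun i => by
      rw [eq_sub_iff_add_eq, eq_comm]
    simp [ringWeights, hj]

lemma matrixEntropy_ringWeights : matrixEntropy (ringWeights n) = log n := by
  rw [matrixEntropy_of_forall_eq_zero_or_eq (c := (n : ℝ)⁻¹)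
    (fun i j => by unfold ringWeights; split_ifs <;> simp)
    (ringWeights_hasUniformMarginals n).sum_sum_eq_one, log_inv, neg_neg]

noncomputable def interpolatedWeights (t : ℝ) : Fin n → Fin n → ℝ :=
  fun i j => t * ringWeights n i j + (1 - t) * completeWeights n i j

lemma interpolatedWeights_nonneg {t : ℝ} (ht : t ∈ Set.Icc (0 : ℝ) 1) (i j : Fin n) :
    0 ≤ interpolatedWeights n t i j := by
  have h1 : 0 ≤ ringWeights n i j := by unfold ringWeights; split_ifs <;> positivity
  have h2 : 0 ≤ completeWeights n i j := by
    unfold completeWeights; split_ifs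
    · rfl
    · have : (1 : ℝ) ≤ n := by exact_mod_cast NeZero.one_le
      have : (0 : ℝ) ≤ n - 1 := by linarith
      positivity
  exact add_nonneg (mul_nonneg ht.1 h1) (mul_nonneg (sub_nonneg.2 ht.2) h2)

lemma interpolatedWeights_self (hn : 2 ≤ n) (t : ℝ) (i : Fin n) :
    interpolatedWeights n t i i = 0 := by
  have hi : i ≠ i + 1 := by
    rw [ne_comm, Ne, add_eq_left, Fin.one_eq_zero_iff]; omega
  simp [interpolatedWeights, ringWeights, completeWeights, hi]

lemma continuous_matrixEntropy_interpolatedWeights :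
    Continuous fun t => matrixEntropy (interpolatedWeights n t) := by
  unfold matrixEntropy interpolatedWeights
  fun_prop

end RingAndComplete

lemma exists_matrixEntropy_interpolatedWeights_eq (n : ℕ) [NeZero n] (hn : 3 ≤ n) :
    ∃ t ∈ Set.Icc (0 : ℝ) 1,
      matrixEntropy (interpolatedWeights n t) = 2 * exp 1 * log n / (exp 1 + 1) := by
  have h0 : interpolatedWeights n 0 = completeWeights n := by
    ext; simp [interpolatedWeights]
  have h1 : interpolatedWeights n 1 = ringWeights n := by
    ext; simp [interpolatedWeights]
  have he := exp_one_lt_d9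
  have he' := exp_one_gt_d9
  have hn3 : (3 : ℝ) ≤ n := by exact_mod_cast hn
  have hlog : 0 ≤ log n := log_nonneg (by linarith)
  have hlog_pred : 0 ≤ log ((n : ℝ) - 1) := log_nonneg (by linarith)
  have hlog_le : log n ≤ 2 * log ((n : ℝ) - 1) := by
    rw [← log_rpow (by linarith)]
    exact log_le_log (by linarith) (by norm_num; nlinarith)
  have hring : matrixEntropy (interpolatedWeights n 1) ≤ 2 * exp 1 * log n / (exp 1 + 1) := by
    rw [h1, matrixEntropy_ringWeights, le_div_iff₀ (by positivity)]
    nlinarith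
  have hcomplete :
      2 * exp 1 * log n / (exp 1 + 1) ≤ matrixEntropy (interpolatedWeights n 0) := by
    rw [h0, matrixEntropy_completeWeights n (by omega), div_le_iff₀ (by positivity),
      log_mul (by positivity) (by linarith)]
    nlinarith
  exact intermediate_value_Icc' zero_le_one
    (continuous_matrixEntropy_interpolatedWeights n).continuousOn ⟨hring, hcomplete⟩

theorem exists_optimal_resilience (N : ℕ) (hN : 3 ≤ N) :
    ∃ P : Fin N → Fin N → ℝ,
      (∀ i j, 0 ≤ P i j) ∧ (∀ i, P i i = 0) ∧
      (∑ i : Fin N, ∑ j : Fin N, P i j = 1) ∧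
      ∃ E R : ℝ,
        E = (∑ i : Fin N, ∑ j : Fin N,
          P i j * Real.log (P i j / ((∑ k : Fin N, P i k) * (∑ k : Fin N, P k j)))) ∧
        R = (-(∑ i : Fin N, ∑ j : Fin N, P i j * Real.log (P i j / (∑ k : Fin N, P i k)))
          - ∑ i : Fin N, ∑ j : Fin N, P i j * Real.log (P i j / (∑ k : Fin N, P k j))) ∧
        E / (E + R) = (Real.exp 1)⁻¹ ∧
        -(E / (E + R)) * Real.log (E / (E + R)) = (Real.exp 1)⁻¹ := by
  have : NeZero N := ⟨by omega⟩
  obtain ⟨t, ht, hH⟩ := exists_matrixEntropy_interpolatedWeights_eq N hN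
  have hP : HasUniformMarginals (interpolatedWeights N t) :=
    (ringWeights_hasUniformMarginals N).convexCombination
      (completeWeights_hasUniformMarginals N (by omega)) t
  refine ⟨interpolatedWeights N t, interpolatedWeights_nonneg N ht,
    interpolatedWeights_self N (by omega) t, hP.sum_sum_eq_one, _, _, rfl, rfl, ?_⟩
  rw [hP.sum_sum_mul_log_div_rowSum_mul_colSum, hP.sum_sum_mul_log_div_rowSum,
    hP.sum_sum_mul_log_div_colSum, Fintype.card_fin]
  set H := matrixEntropy (interpolatedWeights N t)
  have hER : 2 * log N - H + (-(log N - H) - (log N - H)) = H := by ring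
  have hlog : 0 < log N := log_pos (by exact_mod_cast (by omega : 1 < N))
  have hα : (2 * log N - H) / H = (exp 1)⁻¹ := by
    have := exp_pos 1
    rw [hH]
    field_simp
    ring
  rw [hER]
  exact ⟨hα, by rw [hα, log_inv, log_exp, neg_mul_neg, mul_one]⟩
end

section
/- Let N ≥ 4, a = N-3, u(z) = 1/(2N) - a z/2, and f(z) = 2u(z) ln u(z) + a z ln z + (2e/(e+1))(ln N)/N. Then the minimum of f on [0, 1/(N(N-3))] is attained at z = 1/(N(N-1)) and equals (1/N)[((e-1)/(e+1)) ln N - ln(N-1)], which is strictly negative for all N ≥ 4. -/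
/-! The identity `2 u(z) + (N - 3) z = 1/N` makes `f - (2e/(e+1)) ln N / N` a weighted sum
`2 φ(u) + (N - 3) φ(z)` of values of the convex function `φ(x) = x ln x` at points whose
weighted mean does not depend on `z`. Jensen's inequality bounds it below by `(N - 1) φ(z⋆)` with
`z⋆ = 1/(N(N-1))`, and equality holds at `z = z⋆` because `u(z⋆) = z⋆`. -/

open Real Set

theorem Real.add_mul_mul_log_div_le {p q x y : ℝ} (hp : 0 < p) (hq : 0 < q)
    (hx : 0 ≤ x) (hy : 0 ≤ y) :
    (p + q) * ((p * x + q * y) / (p + q) * log ((p * x + q * y) / (p + q)))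
      ≤ p * (x * log x) + q * (y * log y) := by
  have hpq : 0 < p + q := add_pos hp hq
  have hjensen := convexOn_mul_log.2 (mem_Ici.2 hx) (mem_Ici.2 hy)
    (div_nonneg hp.le hpq.le) (div_nonneg hq.le hpq.le) (by field_simp)
  have hmean : p / (p + q) * x + q / (p + q) * y = (p * x + q * y) / (p + q) := by ring
  simp only [smul_eq_mul, hmean] at hjensen
  calc (p + q) * ((p * x + q * y) / (p + q) * log ((p * x + q * y) / (p + q)))
      ≤ (p + q) * (p / (p + q) * (x * log x) + q / (p + q) * (y * log y)) := by gcongr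
    _ = p * (x * log x) + q * (y * log y) := by field_simp

theorem Real.exp_one_sub_one_div_exp_one_add_one_lt_half :
    (exp 1 - 1) / (exp 1 + 1) < 1 / 2 := by
  rw [div_lt_div_iff₀ (by positivity) two_pos]
  linarith [exp_one_lt_d9]

theorem Real.log_le_two_mul_log_sub_one {x : ℝ} (hx : 3 ≤ x) : log x ≤ 2 * log (x - 1) := by
  rw [← log_rpow (by linarith), rpow_two]
  exact log_le_log (by linarith) (by nlinarith)

theorem Real.mul_log_lt_log_sub_one {c x : ℝ} (hc : c < 1 / 2) (hx : 3 ≤ x) :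
    c * log x < log (x - 1) := by
  have hlog : 0 < log x := log_pos (by linarith)
  nlinarith [log_le_two_mul_log_sub_one hx]

theorem sub_one_mul_mul_log_le_of_mem_Icc {n z : ℝ} (hn : 3 < n)
    (hz : z ∈ Icc 0 (1 / (n * (n - 3)))) :
    (n - 1) * (1 / (n * (n - 1)) * log (1 / (n * (n - 1))))
      ≤ 2 * ((1 / (2 * n) - (n - 3) * z / 2) * log (1 / (2 * n) - (n - 3) * z / 2))
        + (n - 3) * (z * log z) := by
  obtain ⟨hz0, hzb⟩ := hz
  have hu : 0 ≤ 1 / (2 * n) - (n - 3) * z / 2 := by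
    rw [le_div_iff₀ (by nlinarith)] at hzb
    field_simp
    nlinarith
  have hmean : (2 * (1 / (2 * n) - (n - 3) * z / 2) + (n - 3) * z) / (2 + (n - 3))
      = 1 / (n * (n - 1)) := by
    rw [show (2 : ℝ) + (n - 3) = n - 1 by ring]
    field_simp
    ring
  have hjensen := add_mul_mul_log_div_le two_pos (by linarith : (0 : ℝ) < n - 3) hu hz0
  rwa [hmean, show (2 : ℝ) + (n - 3) = n - 1 by ring] at hjensen

theorem sub_one_mul_mul_log_one_div_mul_sub_one {n : ℝ} (hn : 1 < n) :
    (n - 1) * (1 / (n * (n - 1)) * log (1 / (n * (n - 1)))) = -(log n + log (n - 1)) / n := by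
  rw [one_div, log_inv, log_mul (by positivity) (by linarith)]
  field_simp [show n - 1 ≠ 0 by linarith]

theorem f_min_negative (N : ℕ) (hN : 4 ≤ N)
    (f : ℝ → ℝ)
    (hf : f = fun z => 2 * (1 / (2 * (N : ℝ)) - ((N : ℝ) - 3) * z / 2)
        * Real.log (1 / (2 * (N : ℝ)) - ((N : ℝ) - 3) * z / 2)
      + ((N : ℝ) - 3) * z * Real.log z
      + (2 * Real.exp 1 / (Real.exp 1 + 1)) * Real.log N / N) :
    (∀ z ∈ Set.Icc (0 : ℝ) (1 / ((N : ℝ) * ((N : ℝ) - 3))),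
      f (1 / ((N : ℝ) * ((N : ℝ) - 1))) ≤ f z) ∧
    f (1 / ((N : ℝ) * ((N : ℝ) - 1)))
      = (1 / (N : ℝ)) * (((Real.exp 1 - 1) / (Real.exp 1 + 1)) * Real.log N
        - Real.log ((N : ℝ) - 1)) ∧
    f (1 / ((N : ℝ) * ((N : ℝ) - 1))) < 0 := by
  have hn : (4 : ℝ) ≤ N := by exact_mod_cast hN
  set n : ℝ := (N : ℝ)
  set zs := 1 / (n * (n - 1)) with hzs
  have hf_zs : f zs = (n - 1) * (zs * log zs) + 2 * exp 1 / (exp 1 + 1) * log n / n := by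
    have hu_zs : 1 / (2 * n) - (n - 3) * zs / 2 = zs := by
      rw [hzs]
      field_simp [show n - 1 ≠ 0 by linarith]
      ring
    rw [hf]
    dsimp only
    rw [hu_zs]
    ring
  have hmin : ∀ z ∈ Icc (0 : ℝ) (1 / (n * (n - 3))), f zs ≤ f z := by
    intro z hz
    have := sub_one_mul_mul_log_le_of_mem_Icc (by linarith) hz
    rw [hf_zs, hf]
    linarith
  have hval : f zs = 1 / n * ((exp 1 - 1) / (exp 1 + 1) * log n - log (n - 1)) := by
    rw [hf_zs, hzs, sub_one_mul_mul_log_one_div_mul_sub_one (by linarith)]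
    field_simp
    ring
  refine ⟨hmin, hval, ?_⟩
  rw [hval]
  exact mul_neg_of_pos_of_neg (by positivity)
    (sub_neg.2 (mul_log_lt_log_sub_one exp_one_sub_one_div_exp_one_add_one_lt_half (by linarith)))
end

section
/- Let N ≥ 6, a = N-3, u(z) = 1/(2N) - a z/2, f(z) = 2u(z) ln u(z) + a z ln z + (2e/(e+1))(ln N)/N on [0, 1/(N(N-3))] (with 0 ln 0 = 0). Then f(0) > 0 and f(1/(N(N-3))) < 0, and f has exactly one zero in (0, 1/(N(N-3))). -/
/-!
Write `f z = 2 φ(u z) + a φ(z) + C` with `φ x = x log x`, `u z = 1/(2N) - a z/2` affine and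
`C = (2e/(e+1)) (log N)/N`. Since `φ` is convex on `[0, ∞)` and `u ≥ 0` on `[0, 1/(N a)]`,
`f` is convex there. At the endpoints `f 0 = C - log(2N)/N` and `f (1/(N a)) = C - log(N a)/N`,
whose signs follow from `log N ≥ log 6 > 1 + log 2`. A continuous convex function that is positive
at the left end of an interval and negative at the right end has exactly one zero inside: any
second zero would force the value at the right end to be nonnegative.
-/

open Real Set

theorem ConvexOn.neg_of_nonpos_of_lt {f : ℝ → ℝ} {s : Set ℝ} {x y z : ℝ} (hf : ConvexOn ℝ s f)
    (hx : x ∈ s) (hz : z ∈ s) (hxy : x < y) (hyz : y ≤ z) (hfx : f x ≤ 0) (hfz : f z < 0) :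
    f y < 0 :=
  lt_of_not_ge fun hfy => (hf.le_right_of_left_le'' hx hz hxy hyz (hfx.trans hfy)).not_gt
    (hfz.trans_le hfy)

theorem ConvexOn.existsUnique_zero_Ioo {f : ℝ → ℝ} {a b : ℝ} (hab : a ≤ b)
    (hconv : ConvexOn ℝ (Icc a b) f) (hcont : ContinuousOn f (Icc a b))
    (ha : 0 < f a) (hb : f b < 0) : ∃! z, z ∈ Ioo a b ∧ f z = 0 := by
  obtain ⟨z, hz, hfz⟩ := intermediate_value_Ioo' hab hcont ⟨hb, ha⟩
  have no_zero_right : ∀ x ∈ Ioo a b, f x = 0 → ∀ y ∈ Ioo a b, f y = 0 → ¬ x < y :=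
    fun x hx hfx y hy hfy hxy => (hconv.neg_of_nonpos_of_lt (Ioo_subset_Icc_self hx)
      (right_mem_Icc.2 hab) hxy hy.2.le hfx.le hb).ne hfy
  exact ⟨z, ⟨hz, hfz⟩, fun w ⟨hw, hfw⟩ => le_antisymm
    (not_lt.1 (no_zero_right z hz hfz w hw hfw)) (not_lt.1 (no_zero_right w hw hfw z hz hfz))⟩

theorem one_add_log_two_lt_log {x : ℝ} (hx : 6 ≤ x) : 1 + log 2 < log x := by
  have h : 2 * exp 1 < x := by linarith [exp_one_lt_d9]
  simpa [log_mul, add_comm] using log_lt_log (by positivity) h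

theorem log_two_mul_lt {x : ℝ} (hx : 6 ≤ x) : log (2 * x) < 2 * exp 1 / (exp 1 + 1) * log x := by
  have hL := one_add_log_two_lt_log hx
  rw [log_mul two_ne_zero (by positivity), div_mul_eq_mul_div, lt_div_iff₀ (by positivity)]
  nlinarith [exp_one_gt_d9, log_two_lt_d9]

theorem lt_log_mul_sub_three {x : ℝ} (hx : 6 ≤ x) :
    2 * exp 1 / (exp 1 + 1) * log x < log (x * (x - 3)) := by
  have hL := one_add_log_two_lt_log hx
  have hhalf : log x - log 2 ≤ log (x - 3) := by
    rw [← log_div (by positivity) two_ne_zero]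
    exact log_le_log (by positivity) (by linarith)
  rw [log_mul (by positivity) (by linarith), div_mul_eq_mul_div, div_lt_iff₀ (by positivity)]
  have he := exp_one_lt_d9
  have hl := log_two_lt_d9
  have hl0 : 0 < log 2 := log_pos one_lt_two
  nlinarith [mul_le_mul_of_nonneg_left hhalf (by positivity : (0 : ℝ) ≤ exp 1 + 1),
    mul_lt_mul_of_pos_right he hl0]

noncomputable def entropyGap (n a C z : ℝ) : ℝ :=
  2 * (1 / (2 * n) - a * z / 2) * log (1 / (2 * n) - a * z / 2) + a * z * log z + C

section entropyGap

variable {n a : ℝ} (C : ℝ)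

theorem entropyGap_eq_mul_log : entropyGap n a C = fun z =>
    2 * ((1 / (2 * n) - a * z / 2) * log (1 / (2 * n) - a * z / 2)) + a * (z * log z) + C := by
  funext z
  rw [entropyGap]
  ring

theorem continuous_entropyGap : Continuous (entropyGap n a C) := by
  rw [entropyGap_eq_mul_log]
  fun_prop

theorem convexOn_entropyGap (hn : 0 < n) (ha : 0 < a) :
    ConvexOn ℝ (Icc 0 (1 / (n * a))) (entropyGap n a C) := by
  have hu : ConvexOn ℝ (Icc 0 (1 / (n * a)))
      (fun z => (1 / (2 * n) - a * z / 2) * log (1 / (2 * n) - a * z / 2)) := by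
    refine ((convexOn_mul_log.comp_affineMap
      ((-(a / 2) • LinearMap.id).toAffineMap + AffineMap.const ℝ ℝ (1 / (2 * n)))).subset
      (fun z hz => ?_) (convex_Icc _ _)).congr fun z _ => ?_
    · have : a * z ≤ 1 / n := by
        calc a * z ≤ a * (1 / (n * a)) := mul_le_mul_of_nonneg_left hz.2 ha.le
          _ = 1 / n := by field_simp
      simp only [mem_preimage, mem_Ici, AffineMap.coe_add, LinearMap.coe_toAffineMap, Pi.add_apply,
        LinearMap.smul_apply, LinearMap.id_apply, smul_eq_mul, AffineMap.const_apply]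
      linarith [show 1 / (2 * n) = 1 / n / 2 by ring]
    · simp only [Function.comp_apply, AffineMap.coe_add, LinearMap.coe_toAffineMap, Pi.add_apply,
        LinearMap.smul_apply, LinearMap.id_apply, smul_eq_mul, AffineMap.const_apply]
      ring_nf
  have hid : ConvexOn ℝ (Icc 0 (1 / (n * a))) (fun z => z * log z) :=
    convexOn_mul_log.subset Icc_subset_Ici_self (convex_Icc _ _)
  rw [entropyGap_eq_mul_log]
  exact ((hu.smul zero_le_two).add (hid.smul ha.le)).add_const C

theorem entropyGap_zero (hn : n ≠ 0) : entropyGap n a C 0 = C - log (2 * n) / n := by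
  simp only [entropyGap, mul_zero, zero_div, sub_zero, zero_mul, add_zero, one_div, log_inv]
  field_simp
  ring

theorem entropyGap_one_div_mul (hn : n ≠ 0) (ha : a ≠ 0) :
    entropyGap n a C (1 / (n * a)) = C - log (n * a) / n := by
  have hu : 1 / (2 * n) - a * (1 / (n * a)) / 2 = 0 := by field_simp; ring
  rw [entropyGap, hu, one_div, log_inv]
  field_simp
  ring

end entropyGap

theorem f_unique_zero (N : ℕ) (hN : 6 ≤ N)
    (f : ℝ → ℝ)
    (hf : f = fun z => 2 * (1 / (2 * (N : ℝ)) - ((N : ℝ) - 3) * z / 2)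
        * Real.log (1 / (2 * (N : ℝ)) - ((N : ℝ) - 3) * z / 2)
      + ((N : ℝ) - 3) * z * Real.log z
      + (2 * Real.exp 1 / (Real.exp 1 + 1)) * Real.log N / N) :
    f 0 > 0 ∧ f (1 / ((N : ℝ) * ((N : ℝ) - 3))) < 0 ∧
    ∃! z : ℝ, z ∈ Set.Ioo (0 : ℝ) (1 / ((N : ℝ) * ((N : ℝ) - 3))) ∧ f z = 0 := by
  have hN6 : (6 : ℝ) ≤ N := by exact_mod_cast hN
  have hN0 : (0 : ℝ) < N := by linarith
  have ha : (0 : ℝ) < N - 3 := by linarith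
  replace hf : f = entropyGap N (N - 3) (2 * exp 1 / (exp 1 + 1) * log N / N) := hf
  have h0 : 0 < f 0 := by
    rw [hf, entropyGap_zero _ hN0.ne', sub_pos]
    exact div_lt_div_of_pos_right (log_two_mul_lt hN6) hN0
  have h1 : f (1 / (N * (N - 3))) < 0 := by
    rw [hf, entropyGap_one_div_mul _ hN0.ne' ha.ne', sub_neg]
    exact div_lt_div_of_pos_right (lt_log_mul_sub_three hN6) hN0
  subst hf
  exact ⟨h0, h1, ConvexOn.existsUnique_zero_Ioo (by positivity) (convexOn_entropyGap _ hN0 ha)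
    (continuous_entropyGap _).continuousOn h0 h1⟩
end

section
/- Let N ≥ 4, b = N-2, v(z) = 1/N - b z, and g(z) = b z ln z + v(z) ln v(z) + (2e/(e+1))(ln N)/N on [0, 1/(N(N-2))] (with 0 ln 0 = 0). Then g(0) > 0, g(1/(N(N-2))) < 0, g'(z) = b ln(z/v(z)), and g has a unique zero in (0, 1/(N(N-2))). -/
/-!
Writing `v z = 1/N - (N-2) z`, the derivative `(N-2) (log z - log v z)` of `g` vanishes only at
`m = 1/(N(N-1))`, where `z = v z`; so `g` decreases on `[0, m]` and increases on
`[m, 1/(N(N-2))]`. As `g` is already negative at the right endpoint, it is negative on the whole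
increasing branch, and the sign change `g 0 > 0 > g m` on the decreasing branch gives exactly
one zero. The endpoint signs reduce to `1 < 2e/(e+1) < 3/2` and `log N ≤ 2 log (N-2)`.
-/

open Real Set

theorem existsUnique_zero_of_strictAntiOn_of_strictMonoOn {f : ℝ → ℝ} {a m b : ℝ}
    (ham : a ≤ m) (hmb : m ≤ b) (hf : ContinuousOn f (Icc a m))
    (hanti : StrictAntiOn f (Icc a m)) (hmono : StrictMonoOn f (Icc m b))
    (ha : 0 < f a) (hb : f b < 0) : ∃! z, z ∈ Ioo a b ∧ f z = 0 := by
  have hle_b : ∀ z ∈ Icc m b, f z ≤ f b := fun z hz =>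
    hmono.monotoneOn hz ⟨hmb, le_rfl⟩ hz.2
  have hzero_lt : ∀ z ∈ Ioo a b, f z = 0 → z ∈ Ioo a m := fun z hz hfz =>
    ⟨hz.1, lt_of_not_ge fun hmz => by linarith [hle_b z ⟨hmz, hz.2.le⟩]⟩
  have hm : f m < 0 := (hle_b m ⟨le_rfl, hmb⟩).trans_lt hb
  obtain ⟨z, hz, hfz⟩ := intermediate_value_Ioo' ham hf ⟨hm, ha⟩
  refine ⟨z, ⟨⟨hz.1, hz.2.trans_le hmb⟩, hfz⟩, fun y ⟨hy, hfy⟩ => ?_⟩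
  exact hanti.injOn (Ioo_subset_Icc_self (hzero_lt y hy hfy)) (Ioo_subset_Icc_self hz)
    (hfy.trans hfz.symm)

/-- The negative entropy of `b` masses `z` and one mass `s - b z`, shifted by `C`; the paper's `g`
is `shiftedNegEntropy (N - 2) (1 / N) (2e/(e+1) · log N / N)`. -/
noncomputable def shiftedNegEntropy (b s C z : ℝ) : ℝ :=
  b * z * log z + (s - b * z) * log (s - b * z) + C

namespace shiftedNegEntropy

variable {b s C : ℝ}

theorem apply_zero : shiftedNegEntropy b s C 0 = s * log s + C := by
  simp [shiftedNegEntropy]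

theorem apply_div (hb : b ≠ 0) : shiftedNegEntropy b s C (s / b) = s * log (s / b) + C := by
  simp [shiftedNegEntropy, mul_div_cancel₀ s hb]

theorem continuous : Continuous (shiftedNegEntropy b s C) := by
  unfold shiftedNegEntropy
  have hz : Continuous fun z : ℝ => b * z * log z := by
    simpa only [mul_assoc] using continuous_mul_log.const_mul b
  exact (hz.add (continuous_mul_log.comp (by fun_prop))).add continuous_const

theorem hasDerivAt {z : ℝ} (hz : z ≠ 0) (hv : s - b * z ≠ 0) :
    HasDerivAt (shiftedNegEntropy b s C) (b * log (z / (s - b * z))) z := by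
  have hz_term : HasDerivAt (fun x => b * x * log x) (b * (log z + 1)) z := by
    simpa only [mul_assoc] using (hasDerivAt_mul_log hz).const_mul b
  have hv_deriv : HasDerivAt (fun x => s - b * x) (-(b * 1)) z :=
    ((hasDerivAt_id z).const_mul b).const_sub s
  have hv_term := (hasDerivAt_mul_log hv).comp z hv_deriv
  refine ((hz_term.add hv_term).add_const C).congr_deriv ?_
  rw [log_div hz hv]
  ring

theorem deriv_of_mem_Ioo (hb : 0 < b) {z : ℝ} (hz : z ∈ Ioo 0 (s / b)) :
    deriv (shiftedNegEntropy b s C) z = b * log (z / (s - b * z)) := by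
  have hv : 0 < s - b * z := sub_pos.2 ((lt_div_iff₀' hb).1 hz.2)
  exact (hasDerivAt hz.1.ne' hv.ne').deriv

theorem strictAntiOn (hb : 0 < b) :
    StrictAntiOn (shiftedNegEntropy b s C) (Icc 0 (s / (b + 1))) := by
  refine strictAntiOn_of_deriv_neg (convex_Icc _ _) continuous.continuousOn fun z hz => ?_
  rw [interior_Icc] at hz
  have hzv : z < s - b * z := by nlinarith [(lt_div_iff₀ (by linarith : 0 < b + 1)).1 hz.2]
  have hsb : z < s / b := (lt_div_iff₀' hb).2 (by linarith [hz.1])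
  rw [deriv_of_mem_Ioo hb ⟨hz.1, hsb⟩]
  have hv : 0 < s - b * z := hz.1.trans hzv
  exact mul_neg_of_pos_of_neg hb (log_neg (div_pos hz.1 hv) ((div_lt_one hv).2 hzv))

theorem strictMonoOn (hb : 0 < b) :
    StrictMonoOn (shiftedNegEntropy b s C) (Icc (s / (b + 1)) (s / b)) := by
  refine strictMonoOn_of_deriv_pos (convex_Icc _ _) continuous.continuousOn fun z hz => ?_
  rw [interior_Icc] at hz
  have hvz : s - b * z < z := by nlinarith [(div_lt_iff₀ (by linarith : 0 < b + 1)).1 hz.1]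
  have hv : 0 < s - b * z := sub_pos.2 ((lt_div_iff₀' hb).1 hz.2)
  rw [deriv_of_mem_Ioo hb ⟨by linarith, hz.2⟩]
  exact mul_pos hb (log_pos ((one_lt_div hv).2 hvz))

end shiftedNegEntropy

theorem one_lt_two_mul_exp_one_div : 1 < 2 * exp 1 / (exp 1 + 1) := by
  rw [lt_div_iff₀ (by positivity)]
  linarith [exp_one_gt_d9]

theorem two_mul_exp_one_div_lt : 2 * exp 1 / (exp 1 + 1) < 3 / 2 := by
  rw [div_lt_iff₀ (by positivity)]
  linarith [exp_one_lt_d9]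

theorem log_le_two_mul_log_sub_two {x : ℝ} (hx : 4 ≤ x) : log x ≤ 2 * log (x - 2) := by
  rw [← log_rpow (by linarith), rpow_two]
  exact log_le_log (by linarith) (by nlinarith)

open shiftedNegEntropy in
theorem g_unique_zero (N : ℕ) (hN : 4 ≤ N)
    (g : ℝ → ℝ)
    (hg : g = fun z => ((N : ℝ) - 2) * z * Real.log z
      + (1 / (N : ℝ) - ((N : ℝ) - 2) * z) * Real.log (1 / (N : ℝ) - ((N : ℝ) - 2) * z)
      + (2 * Real.exp 1 / (Real.exp 1 + 1)) * Real.log N / N) :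
    g 0 > 0 ∧ g (1 / ((N : ℝ) * ((N : ℝ) - 2))) < 0 ∧
    (∀ z ∈ Set.Ioo (0 : ℝ) (1 / ((N : ℝ) * ((N : ℝ) - 2))),
      HasDerivAt g (((N : ℝ) - 2)
        * Real.log (z / (1 / (N : ℝ) - ((N : ℝ) - 2) * z))) z) ∧
    ∃! z : ℝ, z ∈ Set.Ioo (0 : ℝ) (1 / ((N : ℝ) * ((N : ℝ) - 2))) ∧ g z = 0 := by
  have hN4 : (4 : ℝ) ≤ N := by exact_mod_cast hN
  have hb : (0 : ℝ) < N - 2 := by linarith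
  have hNpos : (0 : ℝ) < N := by linarith
  have hlogN : 0 < log N := log_pos (by linarith)
  set c := 2 * exp 1 / (exp 1 + 1)
  obtain rfl : g = shiftedNegEntropy (N - 2) (1 / N) (c * log N / N) := hg
  rw [← div_div]
  have hg0 : 0 < shiftedNegEntropy (N - 2) (1 / N) (c * log N / N) 0 := by
    rw [apply_zero, one_div, log_inv,
      show (N : ℝ)⁻¹ * -log N + c * log N / N = (c - 1) * log N / N by ring]
    exact div_pos (mul_pos (sub_pos.2 one_lt_two_mul_exp_one_div) hlogN) hNpos
  have hga : shiftedNegEntropy (N - 2) (1 / N) (c * log N / N) (1 / N / (N - 2)) < 0 := by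
    rw [apply_div hb.ne', div_div]
    simp only [one_div, log_inv, log_mul hNpos.ne' hb.ne']
    rw [show (N : ℝ)⁻¹ * -(log N + log (N - 2)) + c * log N / N
      = ((c - 1) * log N - log (N - 2)) / N by ring]
    refine div_neg_of_neg_of_pos (sub_neg.2 ?_) hNpos
    nlinarith [two_mul_exp_one_div_lt, log_le_two_mul_log_sub_two hN4]
  refine ⟨hg0, hga, fun z hz => ?_, ?_⟩
  · exact hasDerivAt hz.1.ne' (sub_pos.2 ((lt_div_iff₀' hb).1 hz.2)).ne'
  · have hm : (1 : ℝ) / N / (N - 2 + 1) ≤ 1 / N / (N - 2) :=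
      div_le_div_of_nonneg_left (by positivity) hb (by linarith)
    exact existsUnique_zero_of_strictAntiOn_of_strictMonoOn (by positivity) hm
      continuous.continuousOn (strictAntiOn hb) (strictMonoOn hb) hg0 hga
end

section
/- Let N ≥ 5 and h(x) = x ln x + (1/N - x) ln(1/N - x) + (2e/(e+1))(ln N)/N on [0, 1/N] (with 0 ln 0 = 0). Then h(x) > 0 for all x ∈ [0, 1/N]; i.e., the equation h(x) = 0 has no solution. Equivalently, in the symmetric ring model with z = 0, no network of size N ≥ 5 attains optimal resilience. -/
open Real Set

theorem h_no_zero (N : ℕ) (hN : 5 ≤ N)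
    (h : ℝ → ℝ)
    (hh : h = fun x => x * Real.log x
      + (1 / (N : ℝ) - x) * Real.log (1 / (N : ℝ) - x)
      + (2 * Real.exp 1 / (Real.exp 1 + 1)) * Real.log N / N) :
    ∀ x ∈ Set.Icc (0 : ℝ) (1 / (N : ℝ)), h x > 0 := by
  subst hh
  intro x hx
  have hN5 : (5:ℝ) ≤ N := by exact_mod_cast hN
  have hNpos : (0:ℝ) < N := by linarith
  set c : ℝ := 1 / (N : ℝ) with hc_def
  have hc : 0 < c := by positivity
  have hx0 : (0:ℝ) ≤ x := hx.1
  have hxc : x ≤ c := hx.2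
  -- convexity midpoint bound
  have hconv := Real.convexOn_mul_log.2 (Set.mem_Ici.2 hx0)
    (Set.mem_Ici.2 (by linarith : (0:ℝ) ≤ c - x))
    (by norm_num : (0:ℝ) ≤ (1/2:ℝ)) (by norm_num : (0:ℝ) ≤ (1/2:ℝ)) (by norm_num)
  simp only [smul_eq_mul] at hconv
  have hmid : (c/2) * Real.log (c/2) ≤ (x * Real.log x + (c - x) * Real.log (c - x)) / 2 := by
    have e1 : (1/2:ℝ) * x + (1/2:ℝ) * (c - x) = c / 2 := by ring
    rw [e1] at hconv
    linarith [hconv]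
  -- numeric facts
  have hE := Real.exp_one_gt_d9
  have hl2u := Real.log_two_lt_d9
  have hl2l := Real.log_two_gt_d9
  have hlog54 : (1/5 : ℝ) ≤ Real.log (5/4) := by
    have h1 : Real.log (4/5) ≤ 4/5 - 1 := Real.log_le_sub_one_of_pos (by norm_num)
    have h2 : Real.log (4/5) = - Real.log (5/4) := by
      rw [← Real.log_inv]; norm_num
    linarith [h1, h2.le, h2.ge]
  have hlog5 : (2 * Real.log 2 + 1/5 : ℝ) ≤ Real.log 5 := by
    have h3 : Real.log 5 = Real.log (5/4) + Real.log 4 := by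
      rw [← Real.log_mul (by norm_num) (by norm_num)]; norm_num
    have h4 : Real.log 4 = 2 * Real.log 2 := by
      rw [show (4:ℝ) = 2^2 by norm_num, Real.log_pow]; push_cast; ring
    linarith
  have hlogN : Real.log 5 ≤ Real.log N := Real.log_le_log (by norm_num) hN5
  have hlogNpos : 0 < Real.log N := Real.log_pos (by linarith)
  have hEpos : (0:ℝ) < Real.exp 1 + 1 := by positivity
  -- key inequality : (e-1) log N > (e+1) log 2
  have hkey : (Real.exp 1 + 1) * Real.log 2 < (Real.exp 1 - 1) * Real.log N := by
    nlinarith [hlogN, hlog5, hE, hl2u, hl2l]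
  -- log(c/2) = -(log N + log 2)
  have hlogc : Real.log (c/2) = -(Real.log N + Real.log 2) := by
    rw [hc_def, div_div, one_div, Real.log_inv, Real.log_mul (by positivity) (by norm_num)]
  have hpos : 0 < -(Real.log N + Real.log 2)
      + 2 * Real.exp 1 / (Real.exp 1 + 1) * Real.log N := by
    have h2 : Real.log N + Real.log 2 < 2 * Real.exp 1 / (Real.exp 1 + 1) * Real.log N := by
      rw [div_mul_eq_mul_div, lt_div_iff₀ hEpos]
      nlinarith [hkey]
    linarith
  have hfin : 0 < 2 * ((c/2) * Real.log (c/2))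
      + (2 * Real.exp 1 / (Real.exp 1 + 1)) * Real.log N / N := by
    have eq : 2 * ((c/2) * Real.log (c/2))
        + (2 * Real.exp 1 / (Real.exp 1 + 1)) * Real.log N / N
        = (-(Real.log N + Real.log 2)
            + 2 * Real.exp 1 / (Real.exp 1 + 1) * Real.log N) * (1 / N) := by
      rw [hlogc, hc_def]; ring
    rw [eq]
    exact mul_pos hpos (by positivity)
  show 0 < x * Real.log x + (1 / (N : ℝ) - x) * Real.log (1 / (N : ℝ) - x)
      + (2 * Real.exp 1 / (Real.exp 1 + 1)) * Real.log N / N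
  have hcc : (1 / (N : ℝ)) = c := rfl
  rw [hcc]
  linarith [hmid, hfin]
end

section
/- Define F(λ, N) = [(1+λ(N-2))/(N-1)] ln(N(1+λ(N-2))/(N-1)) + [(N-2)(1-λ)/(N-1)] ln(N(1-λ)/(N-1)) for λ ∈ [0,1) and integer N ≥ 3 (extended by F(1,N) = ln N). Then for each N ≥ 3 the equation F(λ, N) = 2 ln N/(e+1) has a unique solution λ* ∈ (0,1). -/
/-!
Write `φ x = x log x`. Along the interpolation the two distinct link weights, rescaled by `N`,
move affinely from the uniform value `N/(N-1)` to `N` and to `0` respectively, and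
`F = N⁻¹ φ(v) + ((N-2)/N) φ(u)`; hence `F` is continuous and convex on `[0,1]`.
At the ends, `F 0 = log (N/(N-1)) ≤ 1/(N-1) ≤ 1/2 < 2/(e+1) < 2 log N/(e+1)` and
`F 1 = log N > 2 log N/(e+1)`, so the intermediate value theorem gives a solution.
A convex function lying below the level `c` at the left end crosses that level at most once:
if `y < z` both solved `F = c`, then `F 0 < F y` and convexity would force `F y < F z`.
-/

open Real Set AffineMap

theorem ConvexOn.existsUnique_mem_Ioo_eq {f : ℝ → ℝ} {a b c : ℝ} (hab : a ≤ b)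
    (hf : ConvexOn ℝ (Icc a b) f) (hcont : ContinuousOn f (Icc a b)) (ha : f a < c)
    (hb : c < f b) : ∃! x, x ∈ Ioo a b ∧ f x = c := by
  obtain ⟨x, hx, hfx⟩ := intermediate_value_Ioo hab hcont ⟨ha, hb⟩
  have no_lt : ∀ y z, y ∈ Ioo a b → f y = c → z ∈ Ioo a b → f z = c → ¬ y < z := by
    intro y z hy hfy hz hfz hyz
    have hy_seg : y ∈ openSegment ℝ a z := by
      rw [openSegment_eq_Ioo (hy.1.trans hyz)]; exact ⟨hy.1, hyz⟩
    have := hf.lt_right_of_left_lt (left_mem_Icc.2 hab) (Ioo_subset_Icc_self hz) hy_seg (hfy ▸ ha)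
    exact this.ne (hfy.trans hfz.symm)
  refine ⟨x, ⟨hx, hfx⟩, fun y ⟨hy, hfy⟩ => ?_⟩
  exact le_antisymm (not_lt.1 (no_lt x y hx hfx hy hfy)) (not_lt.1 (no_lt y x hy hfy hx hfx))

theorem convexOn_mul_log_lineMap {p q : ℝ} (hp : 0 ≤ p) (hq : 0 ≤ q) :
    ConvexOn ℝ (Icc 0 1) fun t : ℝ => lineMap p q t * log (lineMap p q t) :=
  (convexOn_mul_log.comp_affineMap (lineMap p q)).subset
    (fun _ ht => (convex_Ici (0 : ℝ)).lineMap_mem hp hq ht) (convex_Icc 0 1)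

noncomputable def interpolatedEfficiency (n lam : ℝ) : ℝ :=
  ((1 + lam * (n - 2)) / (n - 1)) * log (n * (1 + lam * (n - 2)) / (n - 1))
    + ((n - 2) * (1 - lam) / (n - 1)) * log (n * (1 - lam) / (n - 1))

theorem interpolatedEfficiency_eq {n : ℝ} (hn : 1 < n) (lam : ℝ) :
    interpolatedEfficiency n lam =
      n⁻¹ * (lineMap (n / (n - 1)) n lam * log (lineMap (n / (n - 1)) n lam))
      + ((n - 2) / n) * (lineMap (n / (n - 1)) 0 lam * log (lineMap (n / (n - 1)) 0 lam)) := by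
  have hn1 : n - 1 ≠ 0 := by linarith
  have hv : lineMap (n / (n - 1)) n lam = n * (1 + lam * (n - 2)) / (n - 1) := by
    rw [lineMap_apply_ring']; field_simp; ring
  have hu : lineMap (n / (n - 1)) 0 lam = n * (1 - lam) / (n - 1) := by
    rw [lineMap_apply_ring']; field_simp; ring
  rw [interpolatedEfficiency, hv, hu]
  field_simp

theorem convexOn_interpolatedEfficiency {n : ℝ} (hn : 2 ≤ n) :
    ConvexOn ℝ (Icc 0 1) (interpolatedEfficiency n) := by
  have hA : 0 ≤ n / (n - 1) := div_nonneg (by linarith) (by linarith)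
  rw [funext (interpolatedEfficiency_eq (by linarith))]
  exact ((convexOn_mul_log_lineMap hA (by linarith)).smul (inv_nonneg.2 (by linarith))).add
    ((convexOn_mul_log_lineMap hA le_rfl).smul (div_nonneg (by linarith) (by linarith)))

theorem continuous_interpolatedEfficiency {n : ℝ} (hn : 1 < n) :
    Continuous (interpolatedEfficiency n) := by
  rw [funext (interpolatedEfficiency_eq hn)]
  exact (continuous_const.mul (continuous_mul_log.comp lineMap_continuous)).add
    (continuous_const.mul (continuous_mul_log.comp lineMap_continuous))

theorem interpolatedEfficiency_zero {n : ℝ} (hn : 1 < n) :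
    interpolatedEfficiency n 0 = log (n / (n - 1)) := by
  have hn1 : n - 1 ≠ 0 := by linarith
  simp only [interpolatedEfficiency, zero_mul, add_zero, sub_zero, mul_one]
  field_simp
  ring

theorem interpolatedEfficiency_one {n : ℝ} (hn : 1 < n) :
    interpolatedEfficiency n 1 = log n := by
  have hn1 : n - 1 ≠ 0 := by linarith
  have hv : n * (1 + 1 * (n - 2)) / (n - 1) = n := by field_simp; ring
  simp only [interpolatedEfficiency, hv, sub_self, mul_zero, zero_div, zero_mul, add_zero]
  field_simp
  ring

theorem interpolatedEfficiency_zero_lt {n : ℝ} (hn : 3 ≤ n) :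
    interpolatedEfficiency n 0 < 2 * log n / (exp 1 + 1) := by
  have he : exp 1 < 3 := by linarith [exp_one_lt_d9]
  have hlog : 1 < log n := by rw [lt_log_iff_exp_lt (by linarith)]; linarith
  have hn1 : 0 < n - 1 := by linarith
  have hle : log (n / (n - 1)) ≤ 1 / 2 :=
    calc log (n / (n - 1)) ≤ n / (n - 1) - 1 := log_le_sub_one_of_pos (by positivity)
      _ = 1 / (n - 1) := by field_simp; ring
      _ ≤ 1 / 2 := by gcongr; linarith
  rw [interpolatedEfficiency_zero (by linarith), lt_div_iff₀ (by positivity)]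
  linarith [mul_le_mul_of_nonneg_right hle (by positivity : (0 : ℝ) ≤ exp 1 + 1)]

theorem lt_interpolatedEfficiency_one {n : ℝ} (hn : 1 < n) :
    2 * log n / (exp 1 + 1) < interpolatedEfficiency n 1 := by
  have he : 1 < exp 1 := by linarith [exp_one_gt_d9]
  have hlog : 0 < log n := log_pos hn
  rw [interpolatedEfficiency_one hn, div_lt_iff₀ (by positivity)]
  nlinarith

theorem unique_lambda_star (N : ℕ) (hN : 3 ≤ N)
    (F : ℝ → ℝ)
    (hF : F = fun lam =>
      ((1 + lam * ((N : ℝ) - 2)) / ((N : ℝ) - 1))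
        * Real.log ((N : ℝ) * (1 + lam * ((N : ℝ) - 2)) / ((N : ℝ) - 1))
      + (((N : ℝ) - 2) * (1 - lam) / ((N : ℝ) - 1))
        * Real.log ((N : ℝ) * (1 - lam) / ((N : ℝ) - 1))) :
    ∃! lam : ℝ, lam ∈ Set.Ioo (0 : ℝ) 1 ∧
      F lam = 2 * Real.log N / (Real.exp 1 + 1) := by
  have hN' : (3 : ℝ) ≤ N := by exact_mod_cast hN
  subst hF
  exact (convexOn_interpolatedEfficiency (by linarith)).existsUnique_mem_Ioo_eq zero_le_one
    (continuous_interpolatedEfficiency (by linarith)).continuousOn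
    (interpolatedEfficiency_zero_lt hN') (lt_interpolatedEfficiency_one (by linarith))
end
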